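/- arXiv:1503.02479 — 9 statements merged into one kernel-verified Lean document; each statement's English description precedes it below -/
import Mathlib

section
/- Consider the N-player Cournot game in which each firm i chooses a commitment x_i ≥ 0 and receives expected profit π_i(x) = p(x_1 + … + x_N)·x_i − E[(x_i − X_i)^+]. Then a Nash equilibrium exists (a vector x with x_i ≥ 0 for all i such that for every i and every alternative x̃_i ≥ 0, π_i(x̃_i, x_{−i}) ≤ π_i(x_i, x_{−i})). Moreover, every Nash equilibrium x satisfies x_1 + … + x_N ≤ y_max. -/
open MeasureTheory

/-- Expected profit of firm `i`: price of aggregate commitment times own commitment,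
minus the expected shortfall penalty `E[(x_i - X_i)^+]`. -/
noncomputable def cournotPayoff {Ω : Type*} [MeasurableSpace Ω] (P : Measure Ω)
    (p : ℝ → ℝ) {N : ℕ} (X : Fin N → Ω → ℝ) (i : Fin N) (x : Fin N → ℝ) : ℝ :=
  p (∑ j, x j) * x i - ∫ ω, max (x i - X i ω) 0 ∂P

/-- A nonnegative profile `x` is a Nash equilibrium if no firm can profit by a
unilateral deviation to another nonnegative commitment. -/
def IsCournotNash {Ω : Type*} [MeasurableSpace Ω] (P : Measure Ω)
    (p : ℝ → ℝ) {N : ℕ} (X : Fin N → Ω → ℝ) (x : Fin N → ℝ) : Prop :=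
  (∀ i, 0 ≤ x i) ∧
    ∀ i : Fin N, ∀ xd : ℝ, 0 ≤ xd →
      cournotPayoff P p X i (Function.update x i xd) ≤ cournotPayoff P p X i x

/-!
Reduce the `N`-dimensional fixed-point problem to one dimension through the aggregate `S`.
For fixed `S`, the function `p S * x + p' S / 2 * x ^ 2 - E[(x - X i)^+]` is strictly concave
(as `p' S < 0`) and its optimality condition is firm `i`'s first-order condition at aggregate
`S`; let `ψ i S` be its maximizer. Since `p'` is continuous (a concave differentiable function
is continuously differentiable) and the maximizer is unique and confined to a fixed compact
interval, `ψ i` is continuous (Berge). At `S = ymax` the price vanishes and `ψ i ymax = 0`,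
so the intermediate value theorem gives `∑ i, ψ i S = S` for some `S ∈ [0, ymax]`; concavity
of `p` (its tangent at `S` lies above it) then shows that no firm gains by deviating.
Conversely, if the aggregate exceeded `ymax` the price would be negative, and any firm with
a positive commitment would gain by dropping to zero.
-/

open Set Filter Topology

theorem convexOn_integral {Ω E : Type*} [MeasurableSpace Ω] {P : Measure Ω} [AddCommGroup E]
    [Module ℝ E] {s : Set E} {f : E → Ω → ℝ} (hs : Convex ℝ s) (hf : ∀ ω, ConvexOn ℝ s (f · ω))
    (hint : ∀ x ∈ s, Integrable (f x) P) : ConvexOn ℝ s (fun x => ∫ ω, f x ω ∂P) := by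
  refine ⟨hs, fun x hx y hy a b ha hb hab => ?_⟩
  calc ∫ ω, f (a • x + b • y) ω ∂P ≤ ∫ ω, (a • f x ω + b • f y ω) ∂P :=
        integral_mono (hint _ (hs hx hy ha hb hab))
          (((hint x hx).smul a).add ((hint y hy).smul b))
          (fun ω => (hf ω).2 hx hy ha hb hab)
    _ = a • ∫ ω, f x ω ∂P + b • ∫ ω, f y ω ∂P := by
        rw [integral_add (f := fun ω => a • f x ω) (g := fun ω => b • f y ω)
          ((hint x hx).smul a) ((hint y hy).smul b), integral_smul, integral_smul]

noncomputable def expectedShortfall {Ω : Type*} [MeasurableSpace Ω] (P : Measure Ω)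
    (Y : Ω → ℝ) (x : ℝ) : ℝ :=
  ∫ ω, max (x - Y ω) 0 ∂P

section Shortfall

variable {Ω : Type*} [MeasurableSpace Ω] {P : Measure Ω} [IsFiniteMeasure P] {Y : Ω → ℝ}

theorem integrable_max_sub_zero (hY : Integrable Y P) (x : ℝ) :
    Integrable (fun ω => max (x - Y ω) 0) P :=
  ((integrable_const x).sub hY).sup (integrable_const 0)

theorem expectedShortfall_mono (hY : Integrable Y P) : Monotone (expectedShortfall P Y) :=
  fun _ _ hab => integral_mono (integrable_max_sub_zero hY _) (integrable_max_sub_zero hY _)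
    fun _ => max_le_max (sub_le_sub_right hab _) le_rfl

theorem expectedShortfall_convexOn (hY : Integrable Y P) :
    ConvexOn ℝ univ (expectedShortfall P Y) :=
  convexOn_integral convex_univ
    (fun ω => ((convexOn_id convex_univ).sub (concaveOn_const (Y ω) convex_univ)).sup
      (convexOn_const 0 convex_univ))
    (fun x _ => integrable_max_sub_zero hY x)

end Shortfall

section ConcaveDeriv

variable {D : Set ℝ} {f : ℝ → ℝ} {x y f' : ℝ}

theorem ConcaveOn.le_add_mul_sub_of_hasDerivAt (hf : ConcaveOn ℝ D f) (hx : x ∈ D) (hy : y ∈ D)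
    (hd : HasDerivAt f f' x) : f y ≤ f x + f' * (y - x) := by
  rcases lt_trichotomy y x with hyx | rfl | hxy
  · have h := hf.le_slope_of_hasDerivAt hy hx hyx hd
    rw [slope_def_field, le_div_iff₀ (sub_pos.2 hyx)] at h
    linarith
  · simp
  · have h := hf.slope_le_of_hasDerivAt hx hy hxy hd
    rw [slope_def_field, div_le_iff₀ (sub_pos.2 hxy)] at h
    linarith

theorem ConcaveOn.mem_uIcc_slope_of_hasDerivAt (hf : ConcaveOn ℝ D f) (hx : x ∈ D) (hy : y ∈ D)
    (hyx : y ≠ x) (hr : 2 * y - x ∈ D) (hd : HasDerivAt f f' y) :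
    f' ∈ uIcc (slope f x y) (slope f y (2 * y - x)) := by
  rcases hyx.lt_or_gt with h | h
  · rw [slope_comm f x y, slope_comm f y (2 * y - x)]
    exact mem_uIcc.2 (Or.inl ⟨hf.slope_le_of_hasDerivAt hy hx h hd,
      hf.le_slope_of_hasDerivAt hr hy (by linarith) hd⟩)
  · exact mem_uIcc.2 (Or.inr ⟨hf.slope_le_of_hasDerivAt hy hr (by linarith) hd,
      hf.le_slope_of_hasDerivAt hx hy h hd⟩)

end ConcaveDeriv

/-- `f' y` is trapped between the slopes of the chords from `y` to `x` and to the reflected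
point `2 y - x`, both of which tend to `f' x` as `y → x`. -/
theorem ConcaveOn.continuousOn_Ici_of_hasDerivAt {f f' : ℝ → ℝ} {a : ℝ}
    (hf : ConcaveOn ℝ (Ici a) f) (hd : ∀ x ∈ Ici a, HasDerivAt f (f' x) x) :
    ContinuousOn f' (Ici a) := by
  intro x hx
  have hlow : Tendsto (slope f x) (𝓝[≠] x) (𝓝 (f' x)) :=
    hasDerivAt_iff_tendsto_slope.mp (hd x hx)
  have hreflect : Tendsto (fun y => 2 * y - x) (𝓝[≠] x) (𝓝[≠] x) := by
    refine tendsto_nhdsWithin_of_tendsto_nhds_of_eventually_within _ ?_ ?_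
    · exact (Continuous.tendsto' (by fun_prop) x x (by ring)).mono_left nhdsWithin_le_nhds
    · filter_upwards [self_mem_nhdsWithin] with y (hy : y ≠ x)
      exact fun h => hy (by linarith [show 2 * y - x = x from h])
  have hhigh : Tendsto (fun y => slope f y (2 * y - x)) (𝓝[≠] x) (𝓝 (f' x)) := by
    have h := ((hlow.comp hreflect).const_mul 2).sub hlow
    rw [show 2 * f' x - f' x = f' x by ring] at h
    refine h.congr' ?_
    filter_upwards [self_mem_nhdsWithin] with y (hy : y ≠ x)
    have : y - x ≠ 0 := sub_ne_zero.2 hy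
    simp only [Function.comp_apply, slope_def_field]
    rw [show 2 * y - x - x = 2 * (y - x) by ring, show 2 * y - x - y = y - x by ring]
    field_simp
    ring
  have hreflect_mem : ∀ᶠ y in 𝓝[Ici a \ {x}] x, 2 * y - x ∈ Ici a := by
    rcases (mem_Ici.mp hx).eq_or_lt with rfl | hax
    · filter_upwards [self_mem_nhdsWithin] with y hy
      exact mem_Ici.2 (by linarith [mem_Ici.mp hy.1])
    · filter_upwards [eventually_nhdsWithin_of_eventually_nhds
        (eventually_gt_nhds (by linarith : (x + a) / 2 < x))] with y hy
      exact mem_Ici.2 (by linarith)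
  have hbetween :
      ∀ᶠ y in 𝓝[Ici a \ {x}] x, f' y ∈ uIcc (slope f x y) (slope f y (2 * y - x)) := by
    filter_upwards [self_mem_nhdsWithin, hreflect_mem] with y ⟨hy, hyx⟩ hr
    exact hf.mem_uIcc_slope_of_hasDerivAt hx hy hyx hr (hd y hy)
  have hle : 𝓝[Ici a \ {x}] x ≤ 𝓝[≠] x := nhdsWithin_mono x (sdiff_subset_compl _ _)
  rw [← continuousWithinAt_sdiff_self, ContinuousWithinAt]
  exact tendsto_of_tendsto_of_tendsto_of_le_of_le'
    (by simpa using (hlow.min hhigh).mono_left hle) (by simpa using (hlow.max hhigh).mono_left hle)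
    (hbetween.mono fun _ h => h.1) (hbetween.mono fun _ h => h.2)

theorem IsCompact.continuousOn_of_isMaxOn_unique {α β γ : Type*} [TopologicalSpace α]
    [TopologicalSpace β] [TopologicalSpace γ] [LinearOrder γ] [OrderClosedTopology γ]
    {f : α → β → γ} {g : α → β} {s : Set α} {K : Set β}
    (hK : IsCompact K) (hf : ContinuousOn (Function.uncurry f) (s ×ˢ K))
    (hgK : ∀ t ∈ s, g t ∈ K) (hg : ∀ t ∈ s, IsMaxOn (f t) K (g t))
    (huniq : ∀ t ∈ s, ∀ x ∈ K, IsMaxOn (f t) K x → x = g t) : ContinuousOn g s := by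
  intro t ht
  refine hK.tendsto_nhds_of_unique_mapClusterPt (eventually_nhdsWithin_of_forall hgK)
    fun x hx hcl => huniq t ht x hx fun y hy => ?_
  have hgraph : MapClusterPt (t, x) (𝓝[s] t) (fun t' => (t', g t')) := by
    rw [((𝓝 t).basis_sets.prod_nhds (𝓝 x).basis_sets).mapClusterPt_iff_frequently]
    rintro ⟨U, V⟩ ⟨hU, hV⟩
    exact ((mapClusterPt_iff_frequently.1 hcl V hV).and_eventually
      (mem_nhdsWithin_of_mem_nhds hU)).mono fun _ h => ⟨h.2, h.1⟩
  let C := {q : α × β | q ∈ s ×ˢ K ∧ f q.1 y ≤ f q.1 q.2}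
  have hC : (t, x) ∈ closure C := hgraph.mem_closure_of_mem C <|
    eventually_nhdsWithin_of_forall fun t' ht' => ⟨⟨ht', hgK t' ht'⟩, hg t' ht' hy⟩
  refine ContinuousWithinAt.closure_le (f := fun q => f q.1 y) (g := Function.uncurry f) hC ?_
    ((hf (t, x) ⟨ht, hx⟩).mono fun _ hq => hq.1) fun _ hq => hq.2
  exact (hf (t, y) ⟨ht, hy⟩).comp_of_eq (continuous_fst.prodMk continuous_const).continuousWithinAt
    (fun _ hq => ⟨hq.1.1, hy⟩) rfl

section Reply

/-- Its first-order condition `p S + p' S * x ∈ ∂h x` is that of a firm committing `x` under the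
penalty `h` when the aggregate commitment is `S`. -/
noncomputable def replyObjective (p p' h : ℝ → ℝ) (S x : ℝ) : ℝ :=
  p S * x + p' S / 2 * x ^ 2 - h x

variable {p p' h : ℝ → ℝ} {S : ℝ}

theorem replyObjective_strictConcaveOn (hS : p' S < 0) (hh : ConvexOn ℝ univ h) :
    StrictConcaveOn ℝ univ (replyObjective p p' h S) := by
  have hlin : ConcaveOn ℝ univ (fun x : ℝ => p S * x) :=
    (LinearMap.mulLeft ℝ (p S)).concaveOn convex_univ
  have hquad : StrictConcaveOn ℝ univ (fun x : ℝ => p' S / 2 * x ^ 2) :=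
    strictConcaveOn_univ_of_deriv2_neg (by fun_prop) fun x => by simp [hS]
  exact (hlin.add_strictConcaveOn hquad).sub_convexOn hh

theorem isMaxOn_replyObjective_zero (hpS : p S ≤ 0) (hp'S : p' S ≤ 0) (hh : Monotone h) :
    IsMaxOn (replyObjective p p' h S) (Ici 0) 0 := fun x (hx : 0 ≤ x) => by
  show replyObjective p p' h S x ≤ replyObjective p p' h S 0
  simp only [replyObjective]
  nlinarith [hh hx, mul_nonpos_of_nonpos_of_nonneg hpS hx,
    mul_nonpos_of_nonpos_of_nonneg hp'S (sq_nonneg x)]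

theorem replyObjective_lt_replyObjective_zero (hpS : p S ≤ p 0) (hp'S : p' S ≤ p' 0)
    (hp'0 : p' 0 < 0) (hh : Monotone h) {x : ℝ} (hx : 0 < x) (hxM : 2 * p 0 / -p' 0 < x) :
    replyObjective p p' h S x < replyObjective p p' h S 0 := by
  rw [div_lt_iff₀ (by linarith)] at hxM
  have := hh hx.le
  simp only [replyObjective]
  nlinarith [mul_le_mul_of_nonneg_right hpS hx.le,
    mul_le_mul_of_nonneg_right hp'S (sq_nonneg x)]

theorem exists_continuousOn_isMaxOn_replyObjective (hp : AntitoneOn p (Ici 0))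
    (hp' : AntitoneOn p' (Ici 0)) (hp'_neg : ∀ S ∈ Ici (0 : ℝ), p' S < 0)
    (hpc : ContinuousOn p (Ici 0)) (hp'c : ContinuousOn p' (Ici 0)) (hp0 : 0 ≤ p 0)
    (hh : Monotone h) (hh_conv : ConvexOn ℝ univ h) :
    ∃ ψ : ℝ → ℝ, ContinuousOn ψ (Ici 0) ∧
      ∀ S ∈ Ici (0 : ℝ), ψ S ∈ Ici 0 ∧ IsMaxOn (replyObjective p p' h S) (Ici 0) (ψ S) := by
  have hp'0 := hp'_neg 0 self_mem_Ici
  set M := 2 * p 0 / -p' 0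
  have hM : 0 ≤ M := div_nonneg (by linarith) (by linarith)
  have hh_cont : Continuous h := continuousOn_univ.mp (hh_conv.continuousOn isOpen_univ)
  have hexists (S : ℝ) : ∃ x ∈ Icc 0 M, IsMaxOn (replyObjective p p' h S) (Icc 0 M) x :=
    isCompact_Icc.exists_isMaxOn (nonempty_Icc.2 hM)
      (by unfold replyObjective; fun_prop : Continuous _).continuousOn
  choose ψ hψM hψ using hexists
  have hglobal : ∀ S ∈ Ici (0 : ℝ), IsMaxOn (replyObjective p p' h S) (Ici 0) (ψ S) := by
    intro S hS y (hy : 0 ≤ y)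
    rcases le_or_gt y M with hyM | hyM
    · exact hψ S ⟨hy, hyM⟩
    · exact (replyObjective_lt_replyObjective_zero (hp self_mem_Ici hS hS)
        (hp' self_mem_Ici hS hS) hp'0 hh (hM.trans_lt hyM) hyM).le.trans (hψ S ⟨le_rfl, hM⟩)
  refine ⟨ψ, isCompact_Icc.continuousOn_of_isMaxOn_unique ?_ (fun S _ => hψM S)
    (fun S _ => hψ S) ?_, fun S hS => ⟨(hψM S).1, hglobal S hS⟩⟩
  · unfold replyObjective
    exact ((hpc.comp continuousOn_fst fun q hq => hq.1).mul continuousOn_snd).add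
      (((hp'c.comp continuousOn_fst fun q hq => hq.1).div_const 2).mul
        (continuousOn_snd.pow 2)) |>.sub (hh_cont.comp_continuousOn continuousOn_snd)
  · exact fun S hS x hx hmax => ((replyObjective_strictConcaveOn (hp'_neg S hS) hh_conv).subset
      (subset_univ _) (convex_Icc 0 M)).eq_of_isMaxOn hmax (hψ S) hx (hψM S)

/-- With `p` replaced by its tangent at `S` (which lies above it), the payoff of `y` minus that
of `x` is the increment of `replyObjective p p' h S` plus `p' S / 2 * (y - x) ^ 2 ≤ 0`. -/
theorem mul_sub_le_of_isMaxOn_replyObjective {x r y : ℝ}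
    (hp : ConcaveOn ℝ (Ici 0) p) (hd : HasDerivAt p (p' S) S) (hp'S : p' S ≤ 0)
    (hx : 0 ≤ x) (hr : 0 ≤ r) (hS : x + r = S)
    (hmax : IsMaxOn (replyObjective p p' h S) (Ici 0) x) (hy : 0 ≤ y) :
    p (y + r) * y - h y ≤ p S * x - h x := by
  have htan := hp.le_add_mul_sub_of_hasDerivAt (mem_Ici.2 (by linarith : 0 ≤ S))
    (mem_Ici.2 (by linarith : 0 ≤ y + r)) hd
  rw [show y + r - S = y - x by linarith] at htan
  have hopt : replyObjective p p' h S y ≤ replyObjective p p' h S x := hmax (mem_Ici.2 hy)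
  simp only [replyObjective] at hopt
  nlinarith [mul_le_mul_of_nonneg_right htan hy,
    mul_nonpos_of_nonpos_of_nonneg hp'S (sq_nonneg (y - x))]

end Reply

section Equilibrium

variable {ι : Type*} [Fintype ι] {p p' : ℝ → ℝ} {h : ι → ℝ → ℝ}

def penalizedPayoff (p : ℝ → ℝ) (h : ι → ℝ → ℝ) (i : ι) (x : ι → ℝ) : ℝ :=
  p (∑ j, x j) * x i - h i (x i)

variable [DecidableEq ι]

theorem sum_le_of_forall_penalizedPayoff_update_zero_le {ymax : ℝ} {x : ι → ℝ}
    (hp : StrictAntiOn p (Ici 0)) (hymax_nonneg : 0 ≤ ymax) (hymax : p ymax = 0)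
    (hh : ∀ i, Monotone (h i)) (hx0 : ∀ i, 0 ≤ x i)
    (hx : ∀ i, penalizedPayoff p h i (Function.update x i 0) ≤ penalizedPayoff p h i x) :
    ∑ i, x i ≤ ymax := by
  by_contra! hgt
  have hpS : p (∑ i, x i) < 0 :=
    hymax ▸ hp hymax_nonneg (Finset.sum_nonneg fun i _ => hx0 i) hgt
  obtain ⟨i, -, hi⟩ : ∃ i ∈ Finset.univ, (0 : ℝ) < x i :=
    Finset.exists_lt_of_sum_lt (by simpa using hymax_nonneg.trans_lt hgt)
  have hdev := hx i
  simp only [penalizedPayoff, Function.update_self, mul_zero, zero_sub] at hdev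
  nlinarith [mul_neg_of_neg_of_pos hpS hi, hh i (hx0 i)]

theorem exists_nashEquilibrium_penalizedPayoff {ymax : ℝ}
    (hp_anti : StrictAntiOn p (Ici 0)) (hp_conc : ConcaveOn ℝ (Ici 0) p)
    (hp_deriv : ∀ y ∈ Ici (0 : ℝ), HasDerivAt p (p' y) y) (hp'0 : p' 0 < 0)
    (hymax_pos : 0 < ymax) (hymax : p ymax = 0)
    (hh : ∀ i, Monotone (h i)) (hh_conv : ∀ i, ConvexOn ℝ univ (h i)) :
    ∃ x : ι → ℝ, (∀ i, 0 ≤ x i) ∧ ∀ i, ∀ y, 0 ≤ y →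
      penalizedPayoff p h i (Function.update x i y) ≤ penalizedPayoff p h i x := by
  have hymax_mem : ymax ∈ Ici (0 : ℝ) := hymax_pos.le
  have hp'_anti : AntitoneOn p' (Ici 0) := fun a ha b hb hab => by
    simpa only [(hp_deriv a ha).deriv, (hp_deriv b hb).deriv] using
      hp_conc.antitoneOn_deriv (fun y hy => (hp_deriv y hy).differentiableAt) ha hb hab
  have hp'_neg : ∀ S ∈ Ici (0 : ℝ), p' S < 0 := fun S hS =>
    (hp'_anti self_mem_Ici hS hS).trans_lt hp'0
  have hp0 : 0 ≤ p 0 := (hymax ▸ hp_anti self_mem_Ici hymax_mem hymax_pos).le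
  choose ψ hψc hψ using fun i => exists_continuousOn_isMaxOn_replyObjective hp_anti.antitoneOn
    hp'_anti hp'_neg (fun y hy => (hp_deriv y hy).continuousAt.continuousWithinAt)
    (hp_conc.continuousOn_Ici_of_hasDerivAt hp_deriv) hp0 (hh i) (hh_conv i)
  have hψ_ymax (i : ι) : ψ i ymax = 0 :=
    ((replyObjective_strictConcaveOn (hp'_neg ymax hymax_mem) (hh_conv i)).subset (subset_univ _)
      (convex_Ici 0)).eq_of_isMaxOn (hψ i ymax hymax_mem).2
      (isMaxOn_replyObjective_zero hymax.le (hp'_neg ymax hymax_mem).le (hh i))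
      (hψ i ymax hymax_mem).1 self_mem_Ici
  obtain ⟨S, hS, hfix⟩ : ∃ S ∈ Icc 0 ymax, ∑ i, ψ i S - S = 0 :=
    intermediate_value_Icc' hymax_pos.le
      ((continuousOn_finsetSum _ fun i _ => (hψc i).mono Icc_subset_Ici_self).sub continuousOn_id)
      ⟨by simpa [hψ_ymax] using hymax_pos.le,
        by simpa using Finset.sum_nonneg fun i _ => (hψ i 0 self_mem_Ici).1⟩
  refine ⟨fun i => ψ i S, fun i => (hψ i S hS.1).1, fun i y hy => ?_⟩
  have hsplit := Finset.add_sum_erase Finset.univ (fun j => ψ j S) (Finset.mem_univ i)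
  simp only [penalizedPayoff, Finset.sum_update_of_mem (Finset.mem_univ i),
    Finset.sdiff_singleton_eq_erase, Function.update_self, sub_eq_zero.1 hfix]
  exact mul_sub_le_of_isMaxOn_replyObjective hp_conc (hp_deriv S hS.1) (hp'_neg S hS.1).le
    (hψ i S hS.1).1 (Finset.sum_nonneg fun j _ => (hψ j S hS.1).1)
    (hsplit.trans (sub_eq_zero.1 hfix)) (hψ i S hS.1).2 hy

end Equilibrium

theorem cournot_nash_exists_and_aggregate_le_ymax_general
    {Ω : Type*} [MeasurableSpace Ω] (P : Measure Ω) [IsProbabilityMeasure P]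
    (p p' : ℝ → ℝ)
    (hp_anti : StrictAntiOn p (Set.Ici (0 : ℝ)))
    (hp_conc : ConcaveOn ℝ (Set.Ici (0 : ℝ)) p)
    (hp_deriv : ∀ y ∈ Set.Ici (0 : ℝ), HasDerivAt p (p' y) y)
    (hp'0 : p' 0 < 0)
    (ymax : ℝ) (hymax_pos : 0 < ymax) (hymax : p ymax = 0)
    (N : ℕ)
    (X : Fin N → Ω → ℝ) (hX : ∀ i, Integrable (X i) P) :
    (∃ x : Fin N → ℝ, IsCournotNash P p X x) ∧
      (∀ x : Fin N → ℝ, IsCournotNash P p X x → ∑ i, x i ≤ ymax) := by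
  have hmono (i : Fin N) := expectedShortfall_mono (hX i)
  obtain ⟨x, hx0, hx⟩ := exists_nashEquilibrium_penalizedPayoff hp_anti hp_conc hp_deriv hp'0
    hymax_pos hymax hmono fun i => expectedShortfall_convexOn (hX i)
  exact ⟨⟨x, hx0, hx⟩, fun x hx => sum_le_of_forall_penalizedPayoff_update_zero_le hp_anti
    hymax_pos.le hymax hmono hx.1 fun i => hx.2 i 0 le_rfl⟩

theorem cournot_nash_exists_and_aggregate_le_ymax
    {Ω : Type*} [MeasurableSpace Ω] (P : Measure Ω) [IsProbabilityMeasure P]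
    (p p' : ℝ → ℝ)
    (hp_anti : StrictAntiOn p (Set.Ici (0 : ℝ)))
    (hp_conc : ConcaveOn ℝ (Set.Ici (0 : ℝ)) p)
    (hp_deriv : ∀ y ∈ Set.Ici (0 : ℝ), HasDerivAt p (p' y) y)
    (hp0 : 0 < p 0) (hp'0 : p' 0 < 0)
    (hp_bot : Filter.Tendsto p Filter.atTop Filter.atBot)
    (ymax : ℝ) (hymax_pos : 0 < ymax) (hymax : p ymax = 0)
    (N : ℕ) (hN : 1 ≤ N)
    (X : Fin N → Ω → ℝ) (hX : ∀ i, Integrable (X i) P) :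
    (∃ x : Fin N → ℝ, IsCournotNash P p X x) ∧
      (∀ x : Fin N → ℝ, IsCournotNash P p X x → ∑ i, x i ≤ ymax) :=
  cournot_nash_exists_and_aggregate_le_ymax_general P p p' hp_anti hp_conc hp_deriv hp'0 ymax
    hymax_pos hymax N X hX
end

section
/- Let Y be an integrable real-valued random variable whose law has no atoms and satisfies P(Y ≤ 0) < p(0), and let y* > 0 be the unique solution of p(y*) = P(Y ≤ y*). Then y* is the unique maximizer over y ≥ 0 of the social welfare W(y) = ∫₀^y p(z) dz − E[(y − Y)^+]; that is, W(y*) > W(y) for every y ≥ 0 with y ≠ y*. -/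
open MeasureTheory

theorem social_welfare_unique_maximizer
    {Ω : Type*} [MeasurableSpace Ω] (P : Measure Ω) [IsProbabilityMeasure P]
    (p p' : ℝ → ℝ)
    (hp_anti : StrictAntiOn p (Set.Ici (0 : ℝ)))
    (hp_conc : ConcaveOn ℝ (Set.Ici (0 : ℝ)) p)
    (hp_deriv : ∀ y ∈ Set.Ici (0 : ℝ), HasDerivAt p (p' y) y)
    (hp0 : 0 < p 0) (hp'0 : p' 0 < 0)
    (hp_bot : Filter.Tendsto p Filter.atTop Filter.atBot)
    (Y : Ω → ℝ) (hY : Integrable Y P)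
    (hY_noatoms : ∀ c : ℝ, P {ω | Y ω = c} = 0)
    (hY0 : (P {ω | Y ω ≤ 0}).toReal < p 0)
    (ystar : ℝ) (hystar_pos : 0 < ystar)
    (hystar : p ystar = (P {ω | Y ω ≤ ystar}).toReal)
    (W : ℝ → ℝ)
    (hW : ∀ y : ℝ, W y = (∫ z in (0 : ℝ)..y, p z) - ∫ ω, max (y - Y ω) 0 ∂P) :
    ∀ y : ℝ, 0 ≤ y → y ≠ ystar → W y < W ystar := by
  -- a measurable version of Y
  set Y' : Ω → ℝ := hY.1.mk Y with hY'def
  have hY'm : Measurable Y' := hY.1.measurable_mk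
  have hYY' : Y =ᵐ[P] Y' := hY.1.ae_eq_mk
  have hmeas : ∀ c : ℝ, MeasurableSet {ω | Y' ω ≤ c} := fun c =>
    measurableSet_le hY'm measurable_const
  have hFeq : ∀ c : ℝ, P {ω | Y ω ≤ c} = P {ω | Y' ω ≤ c} := by
    intro c
    refine measure_congr ?_
    filter_upwards [hYY'] with ω hω
    change (Y ω ≤ c) = (Y' ω ≤ c)
    rw [hω]
  -- integrability of shortfalls
  have hInt : ∀ y : ℝ, Integrable (fun ω => max (y - Y ω) 0) P := fun y =>
    ((integrable_const y).sub hY).pos_part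
  -- key upper bound for shortfall differences
  have key_le : ∀ a b : ℝ, b ≤ a →
      (∫ ω, max (a - Y ω) 0 ∂P) - ∫ ω, max (b - Y ω) 0 ∂P
        ≤ (a - b) * (P {ω | Y ω ≤ a}).toReal := by
    intro a b hba
    rw [← integral_sub (hInt a) (hInt b)]
    have hind : Integrable (({ω | Y' ω ≤ a}).indicator (fun _ => a - b)) P :=
      (integrable_const (a - b)).indicator (hmeas a)
    have hmono : (fun ω => max (a - Y ω) 0 - max (b - Y ω) 0)
        ≤ᵐ[P] ({ω | Y' ω ≤ a}).indicator (fun _ => a - b) := by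
      filter_upwards [hYY'] with ω hω
      rw [Set.indicator_apply]
      by_cases h : ω ∈ {ω | Y' ω ≤ a}
      · simp only [h, if_true]
        have hYa : Y ω ≤ a := by rw [hω]; exact h
        have h1 : max (a - Y ω) 0 = a - Y ω := max_eq_left (by linarith)
        have h2 : b - Y ω ≤ max (b - Y ω) 0 := le_max_left _ _
        linarith
      · simp only [h, if_false]
        have hYa : a < Y ω := by rw [hω]; exact lt_of_not_ge h
        have h1 : max (a - Y ω) 0 = 0 := max_eq_right (by linarith)
        have h2 : max (b - Y ω) 0 = 0 := max_eq_right (by linarith)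
        linarith
    calc (∫ ω, (max (a - Y ω) 0 - max (b - Y ω) 0) ∂P)
        ≤ ∫ ω, ({ω | Y' ω ≤ a}).indicator (fun _ => a - b) ω ∂P :=
          integral_mono_ae ((hInt a).sub (hInt b)) hind hmono
      _ = (P {ω | Y' ω ≤ a}).toReal • (a - b) :=
          integral_indicator_const (a - b) (hmeas a)
      _ = (a - b) * (P {ω | Y ω ≤ a}).toReal := by
          rw [hFeq a, smul_eq_mul, mul_comm]
  -- key lower bound for shortfall differences
  have key_ge : ∀ a b : ℝ, b ≤ a →
      (a - b) * (P {ω | Y ω ≤ b}).toReal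
        ≤ (∫ ω, max (a - Y ω) 0 ∂P) - ∫ ω, max (b - Y ω) 0 ∂P := by
    intro a b hba
    rw [← integral_sub (hInt a) (hInt b)]
    have hind : Integrable (({ω | Y' ω ≤ b}).indicator (fun _ => a - b)) P :=
      (integrable_const (a - b)).indicator (hmeas b)
    have hmono : ({ω | Y' ω ≤ b}).indicator (fun _ => a - b)
        ≤ᵐ[P] (fun ω => max (a - Y ω) 0 - max (b - Y ω) 0) := by
      filter_upwards [hYY'] with ω hω
      rw [Set.indicator_apply]
      by_cases h : ω ∈ {ω | Y' ω ≤ b}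
      · simp only [h, if_true]
        have hYb : Y ω ≤ b := by rw [hω]; exact h
        have h1 : max (a - Y ω) 0 = a - Y ω := max_eq_left (by linarith)
        have h2 : max (b - Y ω) 0 = b - Y ω := max_eq_left (by linarith)
        linarith
      · simp only [h, if_false]
        have h2 : max (b - Y ω) 0 ≤ max (a - Y ω) 0 :=
          max_le_max (by linarith) le_rfl
        linarith
    calc (a - b) * (P {ω | Y ω ≤ b}).toReal
        = (P {ω | Y' ω ≤ b}).toReal • (a - b) := by
          rw [hFeq b, smul_eq_mul, mul_comm]
      _ = ∫ ω, ({ω | Y' ω ≤ b}).indicator (fun _ => a - b) ω ∂P :=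
          (integral_indicator_const (a - b) (hmeas b)).symm
      _ ≤ ∫ ω, (max (a - Y ω) 0 - max (b - Y ω) 0) ∂P :=
          integral_mono_ae hind ((hInt a).sub (hInt b)) hmono
  -- continuity of p on [0, ∞)
  have hpc : ContinuousOn p (Set.Ici (0 : ℝ)) := fun x hx =>
    (hp_deriv x hx).continuousAt.continuousWithinAt
  have hII : ∀ a b : ℝ, 0 ≤ a → 0 ≤ b → IntervalIntegrable p volume a b := by
    intro a b ha hb
    exact (hpc.mono (fun x hx => le_trans (le_inf ha hb) hx.1)).intervalIntegrable
  intro y hy hne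
  rcases lt_or_gt_of_ne hne with hlt | hgt
  · -- y < ystar
    have h1 : (∫ z in (0:ℝ)..ystar, p z) - ∫ z in (0:ℝ)..y, p z
        = ∫ z in y..ystar, p z :=
      intervalIntegral.integral_interval_sub_left
        (hII 0 ystar le_rfl hystar_pos.le) (hII 0 y le_rfl hy)
    have h2 : (∫ ω, max (ystar - Y ω) 0 ∂P) - ∫ ω, max (y - Y ω) 0 ∂P
        ≤ (ystar - y) * p ystar := by
      have := key_le ystar y hlt.le
      rwa [← hystar] at this
    have hpos : 0 < ∫ z in y..ystar, (p z - p ystar) := by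
      refine intervalIntegral.intervalIntegral_pos_of_pos_on
        ((hII y ystar hy hystar_pos.le).sub intervalIntegrable_const) ?_ hlt
      intro x hx
      have hx0 : (0:ℝ) ≤ x := le_trans hy hx.1.le
      have := hp_anti (Set.mem_Ici.mpr hx0) (Set.mem_Ici.mpr hystar_pos.le) hx.2
      linarith
    have h3 : (∫ z in y..ystar, (p z - p ystar))
        = (∫ z in y..ystar, p z) - (ystar - y) * p ystar := by
      rw [intervalIntegral.integral_sub (hII y ystar hy hystar_pos.le)
        intervalIntegrable_const, intervalIntegral.integral_const, smul_eq_mul]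
    rw [hW y, hW ystar]
    linarith
  · -- ystar < y
    have h1 : (∫ z in (0:ℝ)..y, p z) - ∫ z in (0:ℝ)..ystar, p z
        = ∫ z in ystar..y, p z :=
      intervalIntegral.integral_interval_sub_left
        (hII 0 y le_rfl hy) (hII 0 ystar le_rfl hystar_pos.le)
    have h2 : (y - ystar) * p ystar
        ≤ (∫ ω, max (y - Y ω) 0 ∂P) - ∫ ω, max (ystar - Y ω) 0 ∂P := by
      have := key_ge y ystar hgt.le
      rwa [← hystar] at this
    have hpos : 0 < ∫ z in ystar..y, (p ystar - p z) := by
      refine intervalIntegral.intervalIntegral_pos_of_pos_on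
        ((intervalIntegrable_const).sub (hII ystar y hystar_pos.le hy)) ?_ hgt
      intro x hx
      have := hp_anti (Set.mem_Ici.mpr hystar_pos.le)
        (Set.mem_Ici.mpr (le_trans hystar_pos.le hx.1.le)) hx.1
      linarith
    have h3 : (∫ z in ystar..y, (p ystar - p z))
        = (y - ystar) * p ystar - ∫ z in ystar..y, p z := by
      rw [intervalIntegral.integral_sub intervalIntegrable_const
        (hII ystar y hystar_pos.le hy), intervalIntegral.integral_const, smul_eq_mul]
    rw [hW y, hW ystar]
    linarith
end

section
/- Let K ≥ 1 be an integer and let x̄ satisfy 0 < x̄ ≤ y_max/K and p(K·x̄) + p'(K·x̄)·x̄ = 0. Then the gap between the socially optimal aggregate output and the deterministic equilibrium aggregate output satisfies y_max − K·x̄ ≤ (−p'(y_max)) · y_max² / (K · p(0)). -/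
theorem deterministic_equilibrium_gap_bound
    (p p' : ℝ → ℝ)
    (hp_anti : StrictAntiOn p (Set.Ici (0 : ℝ)))
    (hp_conc : ConcaveOn ℝ (Set.Ici (0 : ℝ)) p)
    (hp_deriv : ∀ y ∈ Set.Ici (0 : ℝ), HasDerivAt p (p' y) y)
    (hp0 : 0 < p 0) (hp'0 : p' 0 < 0)
    (hp_bot : Filter.Tendsto p Filter.atTop Filter.atBot)
    (ymax : ℝ) (hymax_pos : 0 < ymax) (hymax : p ymax = 0)
    (K : ℕ) (hK : 1 ≤ K)
    (xb : ℝ) (hxb_pos : 0 < xb) (hxb_le : xb ≤ ymax / K)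
    (hFOC : p (K * xb) + p' (K * xb) * xb = 0) :
    ymax - K * xb ≤ (-p' ymax) * ymax ^ 2 / (K * p 0) := by
  have hKpos : (0 : ℝ) < K := by exact_mod_cast hK
  set S : ℝ := (K : ℝ) * xb with hS
  have hS_pos : 0 < S := mul_pos hKpos hxb_pos
  have hS_le : S ≤ ymax := by
    rw [hS]
    calc (K : ℝ) * xb ≤ K * (ymax / K) := by
          exact mul_le_mul_of_nonneg_left hxb_le hKpos.le
      _ = ymax := by field_simp
  have h0mem : (0 : ℝ) ∈ Set.Ici (0 : ℝ) := Set.mem_Ici.mpr le_rfl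
  have hSmem : S ∈ Set.Ici (0 : ℝ) := hS_pos.le
  have hYmem : ymax ∈ Set.Ici (0 : ℝ) := hymax_pos.le
  -- p' ymax ≤ slope p 0 ymax = -p 0 / ymax
  have hC : p' ymax ≤ (p ymax - p 0) / (ymax - 0) := by
    have := hp_conc.le_slope_of_hasDerivAt h0mem hYmem hymax_pos
      (hp_deriv ymax hYmem)
    rwa [slope_def_field] at this
  have hC' : p' ymax * ymax ≤ -(p 0) := by
    have h : p' ymax ≤ -(p 0) / ymax := by
      simpa [hymax] using hC
    calc p' ymax * ymax ≤ (-(p 0) / ymax) * ymax :=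
          mul_le_mul_of_nonneg_right h hymax_pos.le
      _ = -(p 0) := by field_simp
  have hCneg : p' ymax < 0 := by nlinarith
  -- chord inequality: slope p 0 S ≥ slope p 0 ymax
  have hchord : p S * ymax ≥ p 0 * (ymax - S) := by
    have hanti := hp_conc.slope_anti h0mem
    have h1 : slope p 0 ymax ≤ slope p 0 S := by
      apply hanti ⟨hSmem, by simp [ne_of_gt hS_pos]⟩
        ⟨hYmem, by simp [ne_of_gt hymax_pos]⟩ hS_le
    rw [slope_def_field, slope_def_field] at h1
    have h2 : -(p 0) / ymax ≤ (p S - p 0) / S := by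
      simpa [hymax] using h1
    have h3 : -(p 0) * S ≤ (p S - p 0) * ymax :=
      (div_le_div_iff₀ hymax_pos hS_pos).mp h2
    nlinarith
  -- derivative antitone: p' ymax ≤ p' S
  have hBC : p' ymax ≤ p' S := by
    rcases lt_or_eq_of_le hS_le with h | h
    · have hu : slope p S ymax ≤ p' S :=
        hp_conc.slope_le_of_hasDerivAt hSmem hYmem h (hp_deriv S hSmem)
      have hl : p' ymax ≤ slope p S ymax :=
        hp_conc.le_slope_of_hasDerivAt hSmem hYmem h (hp_deriv ymax hYmem)
      linarith
    · rw [h]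
  have hFOC' : p S = -(p' S) * xb := by rw [hS]; linarith
  -- combine
  rw [ge_iff_le] at hchord
  rw [le_div_iff₀ (by positivity)]
  have hxbS : xb * (K : ℝ) = S := by rw [hS]; ring
  -- p S * K = -(p' S) * S ≤ -(p' ymax) * S ≤ -(p' ymax) * ymax
  have key1 : p S * K ≤ -(p' ymax) * ymax := by
    have e : p S * K = -(p' S) * S := by rw [hFOC', hS]; ring
    have h1 : -(p' S) * S ≤ -(p' ymax) * S := by nlinarith
    have h2 : -(p' ymax) * S ≤ -(p' ymax) * ymax := by nlinarith
    linarith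
  -- (ymax - S) * (K * p 0) ≤ p S * ymax * K ≤ -(p' ymax) * ymax^2
  nlinarith [mul_le_mul_of_nonneg_right key1 hymax_pos.le,
    mul_le_mul_of_nonneg_right hchord hKpos.le]
end

section
/- Let K ≥ 1 be an integer and let F : ℝ → ℝ be nondecreasing with 0 ≤ F(t) ≤ 1 for all t. Suppose x̄ ≥ 0 satisfies p(K·x̄) + p'(K·x̄)·x̄ = 0 and x ≥ 0 satisfies p(K·x) + p'(K·x)·x − F(x) = 0, with x̄, x ≤ y_max/K. Then x ≤ x̄: the equilibrium output under production uncertainty is no larger than the deterministic equilibrium output. -/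
theorem uncertain_equilibrium_le_deterministic
    (p p' : ℝ → ℝ)
    (hp_anti : StrictAntiOn p (Set.Ici (0 : ℝ)))
    (hp_conc : ConcaveOn ℝ (Set.Ici (0 : ℝ)) p)
    (hp_deriv : ∀ y ∈ Set.Ici (0 : ℝ), HasDerivAt p (p' y) y)
    (hp0 : 0 < p 0) (hp'0 : p' 0 < 0)
    (hp_bot : Filter.Tendsto p Filter.atTop Filter.atBot)
    (ymax : ℝ) (hymax_pos : 0 < ymax) (hymax : p ymax = 0)
    (K : ℕ) (hK : 1 ≤ K)
    (F : ℝ → ℝ) (hF_mono : Monotone F) (hF_range : ∀ t, 0 ≤ F t ∧ F t ≤ 1)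
    (xb : ℝ) (hxb_nonneg : 0 ≤ xb) (hxb_le : xb ≤ ymax / K)
    (hxb_FOC : p (K * xb) + p' (K * xb) * xb = 0)
    (x : ℝ) (hx_nonneg : 0 ≤ x) (hx_le : x ≤ ymax / K)
    (hx_FOC : p (K * x) + p' (K * x) * x - F x = 0) :
    x ≤ xb := by
  by_contra hlt
  push_neg at hlt
  have hKpos : (0:ℝ) < K := by exact_mod_cast hK
  -- p' is antitone on Ici 0
  have hconv : ConvexOn ℝ (Set.Ici (0:ℝ)) (-p) := hp_conc.neg
  have hmono : MonotoneOn (deriv (-p)) (Set.Ici (0:ℝ)) :=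
    hconv.monotoneOn_deriv (fun y hy => ((hp_deriv y hy).neg).differentiableAt)
  have hderiv_neg : ∀ y ∈ Set.Ici (0:ℝ), deriv (-p) y = -(p' y) := fun y hy =>
    ((hp_deriv y hy).neg).deriv
  have hp'_anti : ∀ a ∈ Set.Ici (0:ℝ), ∀ b ∈ Set.Ici (0:ℝ), a ≤ b → p' b ≤ p' a := by
    intro a ha b hb hab
    have := hmono ha hb hab
    rw [hderiv_neg a ha, hderiv_neg b hb] at this
    linarith
  have hxb_mem : (K:ℝ) * xb ∈ Set.Ici (0:ℝ) := Set.mem_Ici.mpr (by positivity)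
  have hx_mem : (K:ℝ) * x ∈ Set.Ici (0:ℝ) := Set.mem_Ici.mpr (by positivity)
  have h0 : (0:ℝ) ∈ Set.Ici (0:ℝ) := Set.mem_Ici.mpr le_rfl
  -- p'(K xb) < 0
  have hp'xb : p' (K * xb) ≤ p' 0 := hp'_anti 0 h0 _ hxb_mem (Set.mem_Ici.mp hxb_mem)
  have hp'xb_neg : p' (K * xb) < 0 := lt_of_le_of_lt hp'xb hp'0
  have hKx_lt : (K:ℝ) * xb < K * x := by
    exact mul_lt_mul_of_pos_left hlt hKpos
  have hpx : p (K * x) < p (K * xb) := hp_anti hxb_mem hx_mem hKx_lt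
  have hp'x : p' (K * x) ≤ p' (K * xb) := hp'_anti _ hxb_mem _ hx_mem hKx_lt.le
  have h1 : p' (K * x) * x ≤ p' (K * xb) * x := mul_le_mul_of_nonneg_right hp'x hx_nonneg
  have h2 : p' (K * xb) * x < p' (K * xb) * xb := by
    have := mul_lt_mul_of_neg_left hlt hp'xb_neg
    linarith
  have hFx : 0 ≤ F x := (hF_range x).1
  linarith
end

section
/- Let K ≥ 1 be an integer and let F : ℝ → ℝ be nondecreasing with 0 ≤ F(t) ≤ 1 for all t. Suppose x̄ satisfies 0 < x̄ ≤ y_max/K and p(K·x̄) + p'(K·x̄)·x̄ = 0, and x satisfies 0 ≤ x ≤ x̄ and p(K·x) + p'(K·x)·x − F(x) = 0. Then K·(x̄ − x)·(−p'(0)) ≤ F(x̄); that is, the aggregate output gap between the deterministic and the uncertain symmetric equilibria satisfies K·(x̄ − x) ≤ F(x̄) / (−p'(0)). -/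
theorem uncertainty_output_gap_bound
    (p p' : ℝ → ℝ)
    (hp_anti : StrictAntiOn p (Set.Ici (0 : ℝ)))
    (hp_conc : ConcaveOn ℝ (Set.Ici (0 : ℝ)) p)
    (hp_deriv : ∀ y ∈ Set.Ici (0 : ℝ), HasDerivAt p (p' y) y)
    (hp0 : 0 < p 0) (hp'0 : p' 0 < 0)
    (hp_bot : Filter.Tendsto p Filter.atTop Filter.atBot)
    (ymax : ℝ) (hymax_pos : 0 < ymax) (hymax : p ymax = 0)
    (K : ℕ) (hK : 1 ≤ K)
    (F : ℝ → ℝ) (hF_mono : Monotone F) (hF_range : ∀ t, 0 ≤ F t ∧ F t ≤ 1)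
    (xb : ℝ) (hxb_pos : 0 < xb) (hxb_le : xb ≤ ymax / K)
    (hxb_FOC : p (K * xb) + p' (K * xb) * xb = 0)
    (x : ℝ) (hx_nonneg : 0 ≤ x) (hx_le : x ≤ xb)
    (hx_FOC : p (K * x) + p' (K * x) * x - F x = 0) :
    K * (xb - x) * (-p' 0) ≤ F xb := by
  have hKpos : (0:ℝ) < K := by exact_mod_cast Nat.lt_of_lt_of_le Nat.zero_lt_one hK
  -- antitone derivative on Ici 0
  have hp'_anti : ∀ a ∈ Set.Ici (0:ℝ), ∀ b ∈ Set.Ici (0:ℝ), a ≤ b → p' b ≤ p' a := by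
    intro a ha b hb hab
    rcases eq_or_lt_of_le hab with rfl | hlt
    · exact le_refl _
    · exact le_trans (hp_conc.le_slope_of_hasDerivAt ha hb hlt (hp_deriv b hb))
        (hp_conc.slope_le_of_hasDerivAt ha hb hlt (hp_deriv a ha))
  rcases eq_or_lt_of_le hx_le with rfl | hxlt
  · simpa using (hF_range x).1
  have ha0 : (0:ℝ) ≤ (K:ℝ) * x := by positivity
  have hb0 : (0:ℝ) ≤ (K:ℝ) * xb := by positivity
  have hab : (K:ℝ) * x < (K:ℝ) * xb := mul_lt_mul_of_pos_left hxlt hKpos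
  -- gradient inequality (tangent at left endpoint a = K*x)
  have hslope : slope p ((K:ℝ)*x) ((K:ℝ)*xb) ≤ p' ((K:ℝ)*x) :=
    hp_conc.slope_le_of_hasDerivAt ha0 hb0 hab (hp_deriv _ ha0)
  rw [slope_def_field] at hslope
  have hba : (0:ℝ) < (K:ℝ)*xb - (K:ℝ)*x := sub_pos.mpr hab
  have hgrad : p ((K:ℝ)*xb) - p ((K:ℝ)*x) ≤ p' ((K:ℝ)*x) * ((K:ℝ)*xb - (K:ℝ)*x) := by
    have := mul_le_mul_of_nonneg_right hslope hba.le
    rwa [div_mul_cancel₀ _ hba.ne'] at this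
  have ha_le_0 : p' ((K:ℝ)*x) ≤ p' 0 := hp'_anti 0 Set.self_mem_Ici _ ha0 ha0
  have ha_ge_b : p' ((K:ℝ)*xb) ≤ p' ((K:ℝ)*x) := hp'_anti _ ha0 _ hb0 hab.le
  have h2 : p' ((K:ℝ)*xb) * xb ≤ p' ((K:ℝ)*x) * xb :=
    mul_le_mul_of_nonneg_right ha_ge_b hxb_pos.le
  have hFx_le : F x ≤ F xb := hF_mono hx_le
  have hA : 0 ≤ (p' 0 - p' ((K:ℝ)*x)) * ((K:ℝ) * (xb - x)) :=
    mul_nonneg (sub_nonneg.mpr ha_le_0) (mul_nonneg hKpos.le (sub_nonneg.mpr hxlt.le))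
  have hB : 0 ≤ (-p' 0) * (xb - x) :=
    mul_nonneg (neg_nonneg.mpr hp'0.le) (sub_nonneg.mpr hxlt.le)
  nlinarith [hgrad, h2, hA, hB, hx_FOC, hxb_FOC, hFx_le]
end

section
/- Let X be a real-valued random variable with mean μ and finite variance σ², and suppose μ > y_max. Let N = K·m with K, m positive integers, and let X_K be a sum of m i.i.d. random variables each distributed as X/N. Suppose x satisfies 0 ≤ x ≤ y_max/K and the symmetric equilibrium first-order condition p(K·x) + p'(K·x)·x − P(X_K ≤ x) = 0. Then y_max − K·x ≤ (−p'(y_max))·y_max² / (K·p(0)) + σ²·K / ((−p'(0))·N·(μ − y_max)²); in particular, the efficiency ratio satisfies K·x / y_max ≥ 1 − O(1/K) − O(K/N). -/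
/-!
Chebyshev's inequality bounds the shortfall probability `P(X_K ≤ x)`: the coalition capacity
`X_K` has mean `μ / K > ymax / K ≥ x` and variance `σ² / (K N)`. Concavity of `p` gives the chord
bound `(ymax - K x) p(0) ≤ ymax p(K x)`, the tangent bound `-p'(0) ymax ≤ p(0)` and
`-p'(K x) ≤ -p'(ymax)`; inserted into the first-order condition
`p(K x) = P(X_K ≤ x) - p'(K x) x`, they give the bound on `ymax - K x`.
-/

open MeasureTheory ProbabilityTheory

namespace ConcaveOn

variable {S : Set ℝ} {p p' : ℝ → ℝ} {y₀ : ℝ}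

theorem sub_mul_le_mul_of_apply_eq_zero (hp : ConcaveOn ℝ S p) (h0 : 0 ∈ S) (hy₀S : y₀ ∈ S)
    (hy₀ : 0 < y₀) (hpy₀ : p y₀ = 0) {y : ℝ} (hy : 0 ≤ y) (hyy₀ : y ≤ y₀) :
    (y₀ - y) * p 0 ≤ y₀ * p y := by
  have hconv := hp.2 h0 hy₀S
    (div_nonneg (sub_nonneg.2 hyy₀) hy₀.le : 0 ≤ (y₀ - y) / y₀) (div_nonneg hy hy₀.le)
    (by field_simp; ring)
  have hy' : y / y₀ * y₀ = y := div_mul_cancel₀ y hy₀.ne'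
  simp only [smul_eq_mul, mul_zero, zero_add, add_zero, hpy₀, hy'] at hconv
  rw [div_mul_eq_mul_div, div_le_iff₀ hy₀] at hconv
  linarith

theorem neg_deriv_mul_le_of_apply_eq_zero (hp : ConcaveOn ℝ S p) (h0 : 0 ∈ S) (hy₀S : y₀ ∈ S)
    (hy₀ : 0 < y₀) (hpy₀ : p y₀ = 0) (hp' : HasDerivAt p (p' 0) 0) :
    -p' 0 * y₀ ≤ p 0 := by
  have hslope := hp.slope_le_of_hasDerivAt h0 hy₀S hy₀ hp'
  rw [slope_def_field, hpy₀, sub_zero, div_le_iff₀ hy₀] at hslope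
  linarith

theorem antitoneOn_of_hasDerivAt (hp : ConcaveOn ℝ S p)
    (hp' : ∀ y ∈ S, HasDerivAt p (p' y) y) : AntitoneOn p' S := by
  intro a ha b hb hab
  rcases hab.eq_or_lt with rfl | hab
  · rfl
  exact (hp.le_slope_of_hasDerivAt ha hb hab (hp' b hb)).trans
    (hp.slope_le_of_hasDerivAt ha hb hab (hp' a ha))

end ConcaveOn

theorem efficiency_gap_le_of_foc {p p' : ℝ → ℝ} (hp_conc : ConcaveOn ℝ (Set.Ici 0) p)
    (hp_deriv : ∀ y ∈ Set.Ici (0 : ℝ), HasDerivAt p (p' y) y) (hp0 : 0 < p 0) (hp'0 : p' 0 < 0)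
    {ymax : ℝ} (hymax_pos : 0 < ymax) (hymax : p ymax = 0)
    {K x T B : ℝ} (hK : 0 < K) (hx : 0 ≤ x) (hxK : x ≤ ymax / K) (hT : T ≤ B) (hB : 0 ≤ B)
    (hfoc : p (K * x) + p' (K * x) * x - T = 0) :
    ymax - K * x ≤ -p' ymax * ymax ^ 2 / (K * p 0) + B / -p' 0 := by
  have hKx : K * x ≤ ymax := by rwa [le_div_iff₀' hK] at hxK
  have hchord := hp_conc.sub_mul_le_mul_of_apply_eq_zero Set.self_mem_Ici hymax_pos.le hymax_pos
    hymax (by positivity) hKx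
  have htangent := hp_conc.neg_deriv_mul_le_of_apply_eq_zero Set.self_mem_Ici hymax_pos.le
    hymax_pos hymax (hp_deriv 0 Set.self_mem_Ici)
  have hanti := hp_conc.antitoneOn_of_hasDerivAt hp_deriv
  have hp'_Kx : p' ymax ≤ p' (K * x) := hanti (by positivity : 0 ≤ K * x) hymax_pos.le hKx
  have hp'_ymax : p' ymax ≤ p' 0 := hanti Set.self_mem_Ici hymax_pos.le hymax_pos.le
  have hmarginal : -p' (K * x) * x ≤ -p' ymax * (ymax / K) :=
    mul_le_mul (neg_le_neg hp'_Kx) hxK hx (by linarith)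
  have hB' : B * ymax / p 0 ≤ B / -p' 0 := by
    rw [div_le_div_iff₀ hp0 (by linarith)]
    linarith [mul_le_mul_of_nonneg_left htangent hB]
  calc ymax - K * x ≤ ymax * p (K * x) / p 0 := by rwa [le_div_iff₀ hp0]
    _ = ymax * (T + -p' (K * x) * x) / p 0 := by congr 2; linarith
    _ ≤ ymax * (B + -p' ymax * (ymax / K)) / p 0 := by gcongr
    _ = B * ymax / p 0 + -p' ymax * ymax ^ 2 / (K * p 0) := by field_simp
    _ ≤ -p' ymax * ymax ^ 2 / (K * p 0) + B / -p' 0 := by linarith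

section Chebyshev

variable {Ω : Type*} [MeasurableSpace Ω] {μ : Measure Ω}

theorem measureReal_le_le_variance_div_sq [IsFiniteMeasure μ] {X : Ω → ℝ} (hX : MemLp X 2 μ)
    {a c : ℝ} (hc : 0 < c) (hca : c ≤ μ[X] - a) :
    μ.real {ω | X ω ≤ a} ≤ Var[X; μ] / c ^ 2 := by
  have hsub : {ω | X ω ≤ a} ⊆ {ω | c ≤ |X ω - μ[X]|} := fun ω (hω : X ω ≤ a) ↦ by
    show c ≤ |X ω - μ[X]|
    rw [abs_sub_comm]
    exact hca.trans ((by linarith : μ[X] - a ≤ μ[X] - X ω).trans (le_abs_self _))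
  exact ENNReal.toReal_le_of_le_ofReal (div_nonneg (variance_nonneg _ _) (sq_nonneg _))
    ((measure_mono hsub).trans (meas_ge_le_variance_div_sq hX hc))

variable {ι : Type*} [Fintype ι] {Xs : ι → Ω → ℝ} {Y : Ω → ℝ}

theorem integral_sum_of_identDistrib (hident : ∀ i, IdentDistrib (Xs i) Y μ μ)
    (hY : Integrable Y μ) : μ[∑ i, Xs i] = (Fintype.card ι : ℝ) * μ[Y] := by
  simp_rw [Finset.sum_apply]
  rw [integral_finsetSum _ fun i _ ↦ (hident i).integrable_iff.2 hY]
  simp [(hident _).integral_eq]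

theorem variance_sum_of_iIndepFun_identDistrib (hind : iIndepFun Xs μ)
    (hident : ∀ i, IdentDistrib (Xs i) Y μ μ) (hY : MemLp Y 2 μ) :
    Var[∑ i, Xs i; μ] = Fintype.card ι * Var[Y; μ] := by
  rw [IndepFun.variance_sum (fun i _ ↦ (hident i).memLp_iff.2 hY)
    fun i _ j _ hij ↦ hind.indepFun hij]
  simp [(hident _).variance_eq]

theorem measureReal_sum_le_le_of_iIndepFun_identDistrib [IsFiniteMeasure μ]
    (hind : iIndepFun Xs μ) (hident : ∀ i, IdentDistrib (Xs i) Y μ μ) (hY : MemLp Y 2 μ)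
    {a c : ℝ} (hc : 0 < c) (hca : c ≤ Fintype.card ι * μ[Y] - a) :
    μ.real {ω | ∑ i, Xs i ω ≤ a} ≤ Fintype.card ι * Var[Y; μ] / c ^ 2 := by
  have hsum : MemLp (∑ i, Xs i) 2 μ := memLp_finsetSum' _ fun i _ ↦ (hident i).memLp_iff.2 hY
  have := measureReal_le_le_variance_div_sq hsum hc
    (by rwa [integral_sum_of_identDistrib hident (hY.integrable one_le_two)])
  simpa only [Finset.sum_apply, variance_sum_of_iIndepFun_identDistrib hind hident hY] using this

end Chebyshev

theorem measureReal_coalition_shortfall_le {Ω : Type*} [MeasurableSpace Ω] {P : Measure Ω}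
    [IsProbabilityMeasure P] {X : Ω → ℝ} (hX : MemLp X 2 P) {μ σ : ℝ}
    (hmean : ∫ ω, X ω ∂P = μ) (hvar : ∫ ω, (X ω - μ) ^ 2 ∂P = σ ^ 2) {ymax : ℝ} (hμ : ymax < μ)
    {K m N : ℕ} (hK : 1 ≤ K) (hm : 1 ≤ m) (hN : N = K * m) {Xs : Fin m → Ω → ℝ}
    (hXs_meas : ∀ i, Measurable (Xs i)) (hXs_indep : iIndepFun Xs P)
    (hXs_law : ∀ i, P.map (Xs i) = P.map (fun ω => X ω / N)) {x : ℝ} (hx : x ≤ ymax / K) :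
    P.real {ω | ∑ i, Xs i ω ≤ x} ≤ σ ^ 2 * K / (N * (μ - ymax) ^ 2) := by
  have hK' : (0 : ℝ) < K := by exact_mod_cast hK
  have hm' : (0 : ℝ) < m := by exact_mod_cast hm
  have hN' : (N : ℝ) = K * m := by exact_mod_cast hN
  have hident : ∀ i, IdentDistrib (Xs i) (fun ω ↦ X ω / N) P P := fun i ↦
    ⟨(hXs_meas i).aemeasurable, hX.aemeasurable.div_const _, hXs_law i⟩
  have hY : MemLp (fun ω ↦ X ω / N) 2 P := by
    simpa only [div_eq_mul_inv] using hX.mul_const (N : ℝ)⁻¹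
  have hmean' : P[fun ω ↦ X ω / N] = μ / N := by rw [integral_div, hmean]
  have hvar' : Var[fun ω ↦ X ω / N; P] = σ ^ 2 / N ^ 2 := by
    simp_rw [div_eq_mul_inv]
    rw [variance_mul_const, variance_eq_integral hX.aemeasurable, hmean, hvar, inv_pow]
  have hgap : (μ - ymax) / K ≤ Fintype.card (Fin m) * P[fun ω ↦ X ω / N] - x := by
    rw [hmean', Fintype.card_fin, hN', sub_div]
    have : (m : ℝ) * (μ / (K * m)) = μ / K := by field_simp
    linarith
  refine (measureReal_sum_le_le_of_iIndepFun_identDistrib hXs_indep hident hY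
    (div_pos (sub_pos.2 hμ) hK') hgap).trans_eq ?_
  rw [Fintype.card_fin, hvar', hN']
  field_simp

theorem iid_coalition_efficiency_bound_general
    {Ω : Type*} [MeasurableSpace Ω] (P : Measure Ω) [IsProbabilityMeasure P]
    (p p' : ℝ → ℝ)
    (hp_conc : ConcaveOn ℝ (Set.Ici (0 : ℝ)) p)
    (hp_deriv : ∀ y ∈ Set.Ici (0 : ℝ), HasDerivAt p (p' y) y)
    (hp0 : 0 < p 0) (hp'0 : p' 0 < 0)
    (ymax : ℝ) (hymax_pos : 0 < ymax) (hymax : p ymax = 0)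
    (X : Ω → ℝ) (hX_L2 : MemLp X 2 P)
    (μ σ : ℝ) (hmean : ∫ ω, X ω ∂P = μ) (hvar : ∫ ω, (X ω - μ) ^ 2 ∂P = σ ^ 2)
    (hμ : ymax < μ)
    (K m : ℕ) (hK : 1 ≤ K) (hm : 1 ≤ m)
    (N : ℕ) (hN : N = K * m)
    (Xs : Fin m → Ω → ℝ) (hXs_meas : ∀ i, Measurable (Xs i))
    (hXs_indep : iIndepFun Xs P)
    (hXs_law : ∀ i, P.map (Xs i) = P.map (fun ω => X ω / N))
    (x : ℝ) (hx_nonneg : 0 ≤ x) (hx_le : x ≤ ymax / K)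
    (hx_FOC : p (K * x) + p' (K * x) * x -
        (P {ω | ∑ i, Xs i ω ≤ x}).toReal = 0) :
    ymax - K * x ≤
        (-p' ymax) * ymax ^ 2 / (K * p 0) +
          σ ^ 2 * K / ((-p' 0) * N * (μ - ymax) ^ 2) ∧
      K * x / ymax ≥ 1 -
        ((-p' ymax) * ymax ^ 2 / (K * p 0) +
          σ ^ 2 * K / ((-p' 0) * N * (μ - ymax) ^ 2)) / ymax := by
  have hshortfall := measureReal_coalition_shortfall_le hX_L2 hmean hvar hμ hK hm hN hXs_meas
    hXs_indep hXs_law hx_le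
  have hgap := efficiency_gap_le_of_foc hp_conc hp_deriv hp0 hp'0 hymax_pos hymax
    (by exact_mod_cast hK) hx_nonneg hx_le hshortfall (by positivity) hx_FOC
  rw [div_div, mul_comm _ (-p' 0), ← mul_assoc] at hgap
  refine ⟨hgap, ?_⟩
  rw [ge_iff_le, one_sub_div hymax_pos.ne']
  exact div_le_div_of_nonneg_right (by linarith) hymax_pos.le

theorem iid_coalition_efficiency_bound
    {Ω : Type*} [MeasurableSpace Ω] (P : Measure Ω) [IsProbabilityMeasure P]
    (p p' : ℝ → ℝ)
    (hp_anti : StrictAntiOn p (Set.Ici (0 : ℝ)))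
    (hp_conc : ConcaveOn ℝ (Set.Ici (0 : ℝ)) p)
    (hp_deriv : ∀ y ∈ Set.Ici (0 : ℝ), HasDerivAt p (p' y) y)
    (hp0 : 0 < p 0) (hp'0 : p' 0 < 0)
    (hp_bot : Filter.Tendsto p Filter.atTop Filter.atBot)
    (ymax : ℝ) (hymax_pos : 0 < ymax) (hymax : p ymax = 0)
    (X : Ω → ℝ) (hX_meas : Measurable X) (hX_L2 : MemLp X 2 P)
    (μ σ : ℝ) (hmean : ∫ ω, X ω ∂P = μ) (hvar : ∫ ω, (X ω - μ) ^ 2 ∂P = σ ^ 2)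
    (hμ : ymax < μ)
    (K m : ℕ) (hK : 1 ≤ K) (hm : 1 ≤ m)
    (N : ℕ) (hN : N = K * m)
    (Xs : Fin m → Ω → ℝ) (hXs_meas : ∀ i, Measurable (Xs i))
    (hXs_indep : iIndepFun Xs P)
    (hXs_law : ∀ i, P.map (Xs i) = P.map (fun ω => X ω / N))
    (x : ℝ) (hx_nonneg : 0 ≤ x) (hx_le : x ≤ ymax / K)
    (hx_FOC : p (K * x) + p' (K * x) * x -
        (P {ω | ∑ i, Xs i ω ≤ x}).toReal = 0) :
    ymax - K * x ≤
        (-p' ymax) * ymax ^ 2 / (K * p 0) +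
          σ ^ 2 * K / ((-p' 0) * N * (μ - ymax) ^ 2) ∧
      K * x / ymax ≥ 1 -
        ((-p' ymax) * ymax ^ 2 / (K * p 0) +
          σ ^ 2 * K / ((-p' 0) * N * (μ - ymax) ^ 2)) / ymax :=
  iid_coalition_efficiency_bound_general P p p' hp_conc hp_deriv hp0 hp'0 ymax hymax_pos hymax X
    hX_L2 μ σ hmean hvar hμ K m hK hm N hN Xs hXs_meas hXs_indep hXs_law x hx_nonneg hx_le hx_FOC
end

section
/- Let f : ℝ → ℝ be convex, nondecreasing, and differentiable with f(t) = 0 for all t ≤ 0 and f'(t) ≤ B for all t. Let X_K be an integrable random variable, let K ≥ 1 be an integer, and suppose x̄ satisfies 0 < x̄ ≤ y_max/K and p(K·x̄) + p'(K·x̄)·x̄ = 0, while x satisfies 0 ≤ x ≤ x̄ and p(K·x) + p'(K·x)·x − E[f'(x − X_K)] = 0. Then K·(x̄ − x)·(−p'(0)) ≤ B·P(X_K ≤ x̄). -/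
/-!
Write `MR(x) = p(Kx) + p'(Kx) x` for the marginal revenue of one of `K` symmetric firms. The two
first-order conditions say that `E[f'(x - X_K)] = MR(x) - MR(x̄)`. Concavity of `p` bounds this
gap from below: the tangent at `Kx` gives `p(Kx) - p(Kx̄) ≥ -p'(Kx) K (x̄ - x) ≥ -p'(0) K (x̄ - x)`,
and `p'` being antitone and negative gives `p'(Kx) x ≥ p'(Kx̄) x̄`. From above, `f'` is a
nonnegative function bounded by `B` that vanishes on the negative axis, so `f'(x - X_K) ≤ B` on
`{X_K ≤ x̄}` and `= 0` off it.
-/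

open MeasureTheory

def marginalRevenue (p p' : ℝ → ℝ) (K x : ℝ) : ℝ :=
  p (K * x) + p' (K * x) * x

section Demand

variable {p p' : ℝ → ℝ}

lemma ConcaveOn.sub_le_mul_sub_of_hasDerivAt {S : Set ℝ} (hp : ConcaveOn ℝ S p) {a b : ℝ}
    (ha : a ∈ S) (hb : b ∈ S) (hab : a ≤ b) (hd : HasDerivAt p (p' a) a) :
    p b - p a ≤ p' a * (b - a) := by
  rcases hab.eq_or_lt with rfl | hab
  · simp
  · have hslope := hp.slope_le_of_hasDerivAt ha hb hab hd
    rwa [slope_def_field, div_le_iff₀ (sub_pos.mpr hab)] at hslope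

lemma ConcaveOn.antitoneOn_of_hasDerivAt_s13 {S : Set ℝ} (hp : ConcaveOn ℝ S p)
    (hd : ∀ y ∈ S, HasDerivAt p (p' y) y) : AntitoneOn p' S := by
  intro u hu v hv huv
  rw [← (hd u hu).deriv, ← (hd v hv).deriv]
  exact hp.antitoneOn_deriv (fun y hy ↦ (hd y hy).differentiableAt) hu hv huv

lemma mul_sub_mul_neg_deriv_zero_le_marginalRevenue_sub (hp : ConcaveOn ℝ (Set.Ici 0) p)
    (hd : ∀ y ∈ Set.Ici (0 : ℝ), HasDerivAt p (p' y) y) (hp'0 : p' 0 < 0)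
    {K x xb : ℝ} (hK : 0 ≤ K) (hx : 0 ≤ x) (hxxb : x ≤ xb) :
    K * (xb - x) * (-p' 0) ≤ marginalRevenue p p' K x - marginalRevenue p p' K xb := by
  have hanti := hp.antitoneOn_of_hasDerivAt_s13 hd
  have ha : K * x ∈ Set.Ici (0 : ℝ) := Set.mem_Ici.mpr (mul_nonneg hK hx)
  have hb : K * xb ∈ Set.Ici (0 : ℝ) := Set.mem_Ici.mpr (mul_nonneg hK (hx.trans hxxb))
  have hab : K * x ≤ K * xb := mul_le_mul_of_nonneg_left hxxb hK
  have htangent := hp.sub_le_mul_sub_of_hasDerivAt ha hb hab (hd _ ha)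
  have hp'a : p' (K * x) ≤ p' 0 := hanti Set.self_mem_Ici ha ha
  have hp'b : p' (K * xb) ≤ p' (K * x) := hanti ha hb hab
  have hslope : p' (K * x) * (K * xb - K * x) ≤ p' 0 * (K * xb - K * x) :=
    mul_le_mul_of_nonneg_right hp'a (sub_nonneg.mpr hab)
  have hterm : p' (K * xb) * xb ≤ p' (K * x) * x := by nlinarith
  unfold marginalRevenue
  nlinarith

end Demand

section Penalty

variable {f f' : ℝ → ℝ}

lemma deriv_eq_zero_of_forall_nonpos (hd : ∀ t, HasDerivAt f (f' t) t)
    (hzero : ∀ t ≤ 0, f t = 0) {t : ℝ} (ht : t < 0) : f' t = 0 := by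
  have hloc : f =ᶠ[nhds t] fun _ ↦ 0 :=
    Filter.mem_of_superset (Iio_mem_nhds ht) fun s hs ↦ hzero s (le_of_lt hs)
  exact (hd t).unique ((hasDerivAt_const t (0 : ℝ)).congr_of_eventuallyEq hloc)

lemma ConvexOn.monotone_of_hasDerivAt (hf : ConvexOn ℝ Set.univ f)
    (hd : ∀ t, HasDerivAt f (f' t) t) : Monotone f' := by
  intro u v huv
  rw [← (hd u).deriv, ← (hd v).deriv]
  exact hf.monotoneOn_deriv (fun y _ ↦ (hd y).differentiableAt) trivial trivial huv

lemma deriv_nonneg_of_convexOn (hf : ConvexOn ℝ Set.univ f) (hd : ∀ t, HasDerivAt f (f' t) t)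
    (hzero : ∀ t ≤ 0, f t = 0) (t : ℝ) : 0 ≤ f' t := by
  rcases lt_or_ge t 0 with ht | ht
  · exact (deriv_eq_zero_of_forall_nonpos hd hzero ht).ge
  · rw [← deriv_eq_zero_of_forall_nonpos hd hzero (neg_one_lt_zero : (-1 : ℝ) < 0)]
    exact hf.monotone_of_hasDerivAt hd (by linarith)

end Penalty

lemma integral_le_mul_measure_toReal {Ω : Type*} [MeasurableSpace Ω] {μ : Measure Ω}
    [IsFiniteMeasure μ] {g : Ω → ℝ} {s : Set Ω} {B : ℝ} (hg0 : ∀ ω, 0 ≤ g ω)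
    (hgB : ∀ ω, g ω ≤ B) (hgs : ∀ ω ∉ s, g ω = 0) : ∫ ω, g ω ∂μ ≤ B * (μ s).toReal := by
  -- `s` need not be measurable, so compare with its measurable hull
  set t := toMeasurable μ s
  have hind : ∀ ω, g ω ≤ t.indicator (fun _ ↦ B) ω := by
    intro ω
    by_cases hω : ω ∈ t
    · simpa [Set.indicator_of_mem hω] using hgB ω
    · rw [Set.indicator_of_notMem hω, hgs ω fun hs ↦ hω (subset_toMeasurable μ s hs)]
  calc ∫ ω, g ω ∂μ ≤ ∫ ω, t.indicator (fun _ ↦ B) ω ∂μ :=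
        integral_mono_of_nonneg (ae_of_all _ hg0)
          ((integrable_const B).indicator (measurableSet_toMeasurable μ s)) (ae_of_all _ hind)
    _ = B * (μ s).toReal := by
        rw [integral_indicator_const B (measurableSet_toMeasurable μ s), Measure.real,
          measure_toMeasurable, smul_eq_mul, mul_comm]

theorem generalized_penalty_output_gap_bound_general
    {Ω : Type*} [MeasurableSpace Ω] (P : Measure Ω) [IsProbabilityMeasure P]
    (p p' : ℝ → ℝ)
    (hp_conc : ConcaveOn ℝ (Set.Ici (0 : ℝ)) p)
    (hp_deriv : ∀ y ∈ Set.Ici (0 : ℝ), HasDerivAt p (p' y) y)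
    (hp'0 : p' 0 < 0)
    (f f' : ℝ → ℝ) (B : ℝ)
    (hf_conv : ConvexOn ℝ Set.univ f)
    (hf_deriv : ∀ t : ℝ, HasDerivAt f (f' t) t)
    (hf_zero : ∀ t : ℝ, t ≤ 0 → f t = 0)
    (hf'_le : ∀ t : ℝ, f' t ≤ B)
    (XK : Ω → ℝ)
    (K : ℕ)
    (xb : ℝ)
    (hxb_FOC : p (K * xb) + p' (K * xb) * xb = 0)
    (x : ℝ) (hx_nonneg : 0 ≤ x) (hx_le : x ≤ xb)
    (hx_FOC : p (K * x) + p' (K * x) * x - (∫ ω, f' (x - XK ω) ∂P) = 0) :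
    K * (xb - x) * (-p' 0) ≤ B * (P {ω | XK ω ≤ xb}).toReal := by
  have hgap : marginalRevenue p p' K x - marginalRevenue p p' K xb = ∫ ω, f' (x - XK ω) ∂P := by
    unfold marginalRevenue
    linarith
  calc (K : ℝ) * (xb - x) * (-p' 0)
      ≤ marginalRevenue p p' K x - marginalRevenue p p' K xb :=
        mul_sub_mul_neg_deriv_zero_le_marginalRevenue_sub hp_conc hp_deriv hp'0 K.cast_nonneg
          hx_nonneg hx_le
    _ = ∫ ω, f' (x - XK ω) ∂P := hgap
    _ ≤ B * (P {ω | XK ω ≤ xb}).toReal :=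
        integral_le_mul_measure_toReal (fun ω ↦ deriv_nonneg_of_convexOn hf_conv hf_deriv hf_zero _)
          (fun ω ↦ hf'_le _) fun ω hω ↦
            deriv_eq_zero_of_forall_nonpos hf_deriv hf_zero (by simp at hω; linarith)

theorem generalized_penalty_output_gap_bound
    {Ω : Type*} [MeasurableSpace Ω] (P : Measure Ω) [IsProbabilityMeasure P]
    (p p' : ℝ → ℝ)
    (hp_anti : StrictAntiOn p (Set.Ici (0 : ℝ)))
    (hp_conc : ConcaveOn ℝ (Set.Ici (0 : ℝ)) p)
    (hp_deriv : ∀ y ∈ Set.Ici (0 : ℝ), HasDerivAt p (p' y) y)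
    (hp0 : 0 < p 0) (hp'0 : p' 0 < 0)
    (hp_bot : Filter.Tendsto p Filter.atTop Filter.atBot)
    (ymax : ℝ) (hymax_pos : 0 < ymax) (hymax : p ymax = 0)
    (f f' : ℝ → ℝ) (B : ℝ)
    (hf_conv : ConvexOn ℝ Set.univ f) (hf_mono : Monotone f)
    (hf_deriv : ∀ t : ℝ, HasDerivAt f (f' t) t)
    (hf_zero : ∀ t : ℝ, t ≤ 0 → f t = 0)
    (hf'_le : ∀ t : ℝ, f' t ≤ B)
    (XK : Ω → ℝ) (hXK : Integrable XK P)
    (K : ℕ) (hK : 1 ≤ K)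
    (xb : ℝ) (hxb_pos : 0 < xb) (hxb_le : xb ≤ ymax / K)
    (hxb_FOC : p (K * xb) + p' (K * xb) * xb = 0)
    (x : ℝ) (hx_nonneg : 0 ≤ x) (hx_le : x ≤ xb)
    (hx_FOC : p (K * x) + p' (K * x) * x - (∫ ω, f' (x - XK ω) ∂P) = 0) :
    K * (xb - x) * (-p' 0) ≤ B * (P {ω | XK ω ≤ xb}).toReal :=
  generalized_penalty_output_gap_bound_general P p p' hp_conc hp_deriv hp'0 f f' B hf_conv hf_deriv
    hf_zero hf'_le XK K xb hxb_FOC x hx_nonneg hx_le hx_FOC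
end

section
/- Let Z and W be independent real-valued random variables with W integrable, and suppose the law of Z is absolutely continuous with a density bounded above by M. Then for every a ∈ ℝ: P(Z > a and Z + W ≤ a) ≤ M · E[max(−W, 0)]. -/
open MeasureTheory ProbabilityTheory

theorem common_shock_crossing_probability_bound
    {Ω : Type*} [MeasurableSpace Ω] (P : Measure Ω) [IsProbabilityMeasure P]
    (Z W : Ω → ℝ) (hZ_meas : Measurable Z) (hW_meas : Measurable W)
    (hW_int : Integrable W P)
    (hindep : IndepFun Z W P)
    (M : ℝ) (hM : 0 ≤ M)
    (f : ℝ → ENNReal) (hf_meas : Measurable f)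
    (hpdf : P.map Z = MeasureTheory.volume.withDensity f)
    (hf_le : ∀ x : ℝ, f x ≤ ENNReal.ofReal M)
    (a : ℝ) :
    (P {ω | a < Z ω ∧ Z ω + W ω ≤ a}).toReal ≤
      M * ∫ ω, max (-W ω) 0 ∂P := by
  -- joint law is the product measure
  have hpair : P.map (fun ω => (Z ω, W ω)) = (P.map Z).prod (P.map W) :=
    (indepFun_iff_map_prod_eq_prod_map_map hZ_meas.aemeasurable hW_meas.aemeasurable).mp hindep
  set S : Set (ℝ × ℝ) := {p : ℝ × ℝ | a < p.1 ∧ p.1 + p.2 ≤ a} with hS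
  have hSmeas : MeasurableSet S := by
    apply MeasurableSet.inter
    · exact measurableSet_lt measurable_const measurable_fst
    · exact measurableSet_le (measurable_fst.add measurable_snd) measurable_const
  have hμZ : ∀ w : ℝ, (P.map Z) ((fun z => (z, w)) ⁻¹' S)
      ≤ ENNReal.ofReal M * ENNReal.ofReal (max (-w) 0) := by
    intro w
    have hpre : (fun z => (z, w)) ⁻¹' S = Set.Ioc a (a - w) := by
      ext z
      simp only [hS, Set.mem_preimage, Set.mem_setOf_eq, Set.mem_Ioc]
      constructor
      · rintro ⟨h1, h2⟩; exact ⟨h1, by linarith⟩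
      · rintro ⟨h1, h2⟩; exact ⟨h1, by linarith⟩
    rw [hpre, hpdf, withDensity_apply f measurableSet_Ioc]
    calc ∫⁻ z in Set.Ioc a (a - w), f z
        ≤ ∫⁻ _ in Set.Ioc a (a - w), ENNReal.ofReal M :=
          lintegral_mono fun z => hf_le z
      _ = ENNReal.ofReal M * MeasureTheory.volume (Set.Ioc a (a - w)) := by
          rw [lintegral_const, Measure.restrict_apply_univ]
      _ = ENNReal.ofReal M * ENNReal.ofReal (max (-w) 0) := by
          rw [Real.volume_Ioc]
          congr 1
          rcases le_or_gt w 0 with h | h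
          · rw [max_eq_left (by linarith)]; ring_nf
          · rw [max_eq_right (by linarith)]
            rw [ENNReal.ofReal_eq_zero.mpr (by linarith), ENNReal.ofReal_zero]
  -- probability as measure of S under product law
  have h1 : P {ω | a < Z ω ∧ Z ω + W ω ≤ a} = ((P.map Z).prod (P.map W)) S := by
    rw [← hpair, Measure.map_apply (hZ_meas.prodMk hW_meas) hSmeas]
    rfl
  have h2 : ((P.map Z).prod (P.map W)) S
      ≤ ∫⁻ w, ENNReal.ofReal M * ENNReal.ofReal (max (-w) 0) ∂(P.map W) := by
    rw [Measure.prod_apply_symm hSmeas]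
    exact lintegral_mono fun w => hμZ w
  -- the right-hand lintegral
  have hg_int : Integrable (fun ω => max (-W ω) 0) P :=
    hW_int.neg.sup (integrable_const 0)
  have h3 : ∫⁻ w, ENNReal.ofReal M * ENNReal.ofReal (max (-w) 0) ∂(P.map W)
      = ENNReal.ofReal (M * ∫ ω, max (-W ω) 0 ∂P) := by
    have hmeas : Measurable fun w : ℝ => ENNReal.ofReal M * ENNReal.ofReal (max (-w) 0) :=
      measurable_const.mul (ENNReal.measurable_ofReal.comp (measurable_neg.max measurable_const))
    rw [lintegral_map hmeas hW_meas]
    have : ∀ ω, ENNReal.ofReal M * ENNReal.ofReal (max (-W ω) 0)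
        = ENNReal.ofReal (M * max (-W ω) 0) := fun ω =>
      (ENNReal.ofReal_mul hM).symm
    simp_rw [this]
    rw [← ofReal_integral_eq_lintegral_ofReal (hg_int.const_mul M)
      (Filter.Eventually.of_forall fun ω => mul_nonneg hM (le_max_right _ _))]
    rw [integral_const_mul]
  have hle : P {ω | a < Z ω ∧ Z ω + W ω ≤ a}
      ≤ ENNReal.ofReal (M * ∫ ω, max (-W ω) 0 ∂P) := by
    rw [h1, ← h3]; exact h2
  calc (P {ω | a < Z ω ∧ Z ω + W ω ≤ a}).toReal
      ≤ (ENNReal.ofReal (M * ∫ ω, max (-W ω) 0 ∂P)).toReal :=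
        ENNReal.toReal_mono ENNReal.ofReal_ne_top hle
    _ ≤ M * ∫ ω, max (-W ω) 0 ∂P := le_of_eq (ENNReal.toReal_ofReal
        (mul_nonneg hM (integral_nonneg fun ω => le_max_right _ _)))
end

section
/- Let Z be a real-valued random variable and μ ∈ ℝ. Let y' > 0 satisfy p(y') = P(Z + μ ≤ y') with p(y') < p(0), and let K ≥ 1 be an integer. Suppose x̄ satisfies 0 < x̄ ≤ y'/K and p(K·x̄) + p'(K·x̄)·x̄ − P(Z + μ ≤ K·x̄) = 0. Then y' − K·x̄ ≤ (−p'(y'))·y'² / (K·(p(0) − p(y'))). -/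
open MeasureTheory

theorem common_shock_market_power_gap_bound
    {Ω : Type*} [MeasurableSpace Ω] (P : Measure Ω) [IsProbabilityMeasure P]
    (p p' : ℝ → ℝ)
    (hp_anti : StrictAntiOn p (Set.Ici (0 : ℝ)))
    (hp_conc : ConcaveOn ℝ (Set.Ici (0 : ℝ)) p)
    (hp_deriv : ∀ y ∈ Set.Ici (0 : ℝ), HasDerivAt p (p' y) y)
    (hp0 : 0 < p 0) (hp'0 : p' 0 < 0)
    (hp_bot : Filter.Tendsto p Filter.atTop Filter.atBot)
    (Z : Ω → ℝ) (μ : ℝ)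
    (y' : ℝ) (hy'_pos : 0 < y')
    (hy' : p y' = (P {ω | Z ω + μ ≤ y'}).toReal)
    (hy'_lt : p y' < p 0)
    (K : ℕ) (hK : 1 ≤ K)
    (xb : ℝ) (hxb_pos : 0 < xb) (hxb_le : xb ≤ y' / K)
    (hxb_FOC : p (K * xb) + p' (K * xb) * xb -
        (P {ω | Z ω + μ ≤ K * xb}).toReal = 0) :
    y' - K * xb ≤ (-p' y') * y' ^ 2 / (K * (p 0 - p y')) := by
  have hKpos : (0 : ℝ) < K := by exact_mod_cast hK
  set y : ℝ := (K : ℝ) * xb with hy_def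
  have hy_pos : 0 < y := by positivity
  have hy_le : y ≤ y' := by
    rw [hy_def, mul_comm]
    exact (le_div_iff₀ hKpos).mp hxb_le
  -- monotonicity of the CDF
  have hmono : (P {ω | Z ω + μ ≤ y}).toReal ≤ (P {ω | Z ω + μ ≤ y'}).toReal := by
    refine ENNReal.toReal_le_toReal (measure_ne_top P _) (measure_ne_top P _) |>.mpr ?_
    exact measure_mono (fun ω hω => le_trans hω hy_le)
  -- p'(y') bounded by slope from 0 to y'
  have hsl' : p' y' ≤ (p y' - p 0) / (y' - 0) := by
    have := hp_conc.le_slope_of_hasDerivAt (x := 0) (y := y')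
      Set.self_mem_Ici (le_of_lt hy'_pos) hy'_pos (hp_deriv y' (le_of_lt hy'_pos))
    simpa [slope_def_field, div_eq_iff, sub_eq_iff_eq_add] using this
  have hDpos : 0 < p 0 - p y' := by linarith
  have htangent : p 0 - p y' ≤ (-p' y') * y' := by
    have h := (le_div_iff₀ (by linarith : (0:ℝ) < y' - 0)).mp hsl'
    nlinarith [h]
  have hA_pos : 0 < -p' y' := by
    nlinarith [htangent]
  -- show y' - y ≤ xb
  have hgap : y' - y ≤ xb := by
    rcases eq_or_lt_of_le hy_le with heq | hlt
    · rw [heq]; linarith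
    · -- p'(y) < 0
      have hpy_lt : p y < p 0 := hp_anti Set.self_mem_Ici (le_of_lt hy_pos) hy_pos
      have hsl0 : p' y ≤ (p y - p 0) / (y - 0) := by
        have := hp_conc.le_slope_of_hasDerivAt (x := 0) (y := y)
          Set.self_mem_Ici (le_of_lt hy_pos) hy_pos (hp_deriv y (le_of_lt hy_pos))
        simpa [slope_def_field] using this
      have hp'y_neg : p' y < 0 := by
        have : (p y - p 0) / (y - 0) < 0 := div_neg_of_neg_of_pos (by linarith) (by linarith)
        linarith
      -- tangent at y: slope p y y' ≤ p' y
      have hsl : (p y' - p y) / (y' - y) ≤ p' y := by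
        have := hp_conc.slope_le_of_hasDerivAt (x := y) (y := y')
          (le_of_lt hy_pos) (le_of_lt hy'_pos) hlt (hp_deriv y (le_of_lt hy_pos))
        simpa [slope_def_field] using this
      have h1 : p y' - p y ≤ p' y * (y' - y) :=
        (div_le_iff₀ (by linarith)).mp hsl
      -- FOC plus CDF monotonicity
      have h2 : p y - p y' ≤ -p' y * xb := by
        have : p y + p' y * xb ≤ p y' := by
          rw [hy']
          calc p y + p' y * xb = (P {ω | Z ω + μ ≤ y}).toReal := by linarith [hxb_FOC]
            _ ≤ _ := hmono
        linarith
      -- combine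
      have : -p' y * (y' - y) ≤ -p' y * xb := by linarith
      exact le_of_mul_le_mul_left (by linarith) (by linarith : 0 < -p' y)
  -- final arithmetic
  have hfinal : y' / K ≤ (-p' y') * y' ^ 2 / (K * (p 0 - p y')) := by
    rw [div_le_div_iff₀ hKpos (by positivity)]
    have h1 : (p 0 - p y') * y' ≤ (-p' y') * y' * y' :=
      mul_le_mul_of_nonneg_right htangent hy'_pos.le
    nlinarith [mul_le_mul_of_nonneg_left h1 hKpos.le]
  have hxb_le' : xb ≤ (-p' y') * y' ^ 2 / (K * (p 0 - p y')) := le_trans hxb_le hfinal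
  linarith [hgap]
end
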